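/- arXiv:2207.02819 — 5 statements merged into one kernel-verified Lean document; each statement's English description precedes it below -/
import Mathlib

section
/- For X ~ Poisson(λ), there exists an absolute constant C > 0 (independent of λ) such that Var[X·1(X ≥ 4)] ≤ C·E[X·1(X ≥ 4)]. -/
/-!
With `T k = P(X ≥ k)`, the Poisson identity `E[X g(X)] = λ E[g(X + 1)]` gives
`E[X 1(X ≥ 4)] = λ T 3` and `E[X² 1(X ≥ 4)] = λ (λ T 2 + T 3)`, hence
`Var = λ² P(X = 2) + λ T 3 · λ P(X ≤ 2) + λ T 3`.
Here `λ² P(X = 2) = 3 λ P(X = 3) ≤ 3 λ T 3` and `λ P(X ≤ 2) ≤ 6`, so `C = 10` works.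
-/

open ProbabilityTheory
open scoped NNReal

/-- Expectation of `f X` for `X ~ Poisson(r)`. -/
noncomputable def pev (r : ℝ≥0) (f : ℕ → ℝ) : ℝ :=
  ∑' x : ℕ, f x * poissonPMFReal r x

/-- Variance of `f X` for `X ~ Poisson(r)`. -/
noncomputable def pvar (r : ℝ≥0) (f : ℕ → ℝ) : ℝ :=
  pev r (fun x => f x ^ 2) - (pev r f) ^ 2

/-- The function `x ↦ x √(min(x,a) min(x,b)) 1(x ≥ 4)`. -/
noncomputable def fab (a b : ℝ) (x : ℕ) : ℝ :=
  if 4 ≤ x then (x : ℝ) * Real.sqrt (min (x : ℝ) a * min (x : ℝ) b) else 0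

set_option linter.deprecated false

namespace ProbabilityTheory

noncomputable def poissonTail (r : ℝ≥0) (k : ℕ) : ℝ :=
  1 - ∑ i ∈ Finset.range k, poissonPMFReal r i

variable (r : ℝ≥0)

lemma natCast_succ_mul_poissonPMFReal_succ (n : ℕ) :
    ((n : ℝ) + 1) * poissonPMFReal r (n + 1) = r * poissonPMFReal r n := by
  have : (n.factorial : ℝ) ≠ 0 := Nat.cast_ne_zero.2 n.factorial_ne_zero
  simp only [poissonPMFReal, Nat.factorial_succ]
  push_cast
  field_simp
  ring

lemma hasSum_natCast_mul_poissonPMFReal {g : ℕ → ℝ} {a : ℝ}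
    (h : HasSum (fun n => g (n + 1) * poissonPMFReal r n) a) :
    HasSum (fun n : ℕ => n * g n * poissonPMFReal r n) (r * a) := by
  refine (hasSum_nat_add_iff' 1).mp ?_
  simp only [Finset.sum_range_one, Nat.cast_zero, zero_mul, sub_zero]
  refine (h.mul_left (r : ℝ)).congr_fun fun n => ?_
  push_cast
  linear_combination g (n + 1) * natCast_succ_mul_poissonPMFReal_succ r n

lemma hasSum_ite_le_poissonPMFReal (k : ℕ) :
    HasSum (fun n => if k ≤ n then poissonPMFReal r n else 0) (poissonTail r k) := by
  refine (hasSum_nat_add_iff' k).mp ?_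
  rw [Finset.sum_eq_zero fun i hi => if_neg (by simpa using hi), sub_zero]
  exact ((hasSum_nat_add_iff' k).mpr (hasSum_one_poissonMeasure r)).congr_fun fun n => by
    simp [poissonPMFReal]

lemma poissonTail_nonneg (k : ℕ) : 0 ≤ poissonTail r k :=
  (hasSum_ite_le_poissonPMFReal r k).nonneg fun n => by
    split_ifs
    exacts [poissonPMFReal_nonneg, le_rfl]

lemma poissonTail_succ (k : ℕ) :
    poissonTail r (k + 1) = poissonTail r k - poissonPMFReal r k := by
  simp only [poissonTail, Finset.sum_range_succ]
  ring

lemma hasSum_ite_le_natCast_mul_poissonPMFReal (k : ℕ) :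
    HasSum (fun n => (if k + 1 ≤ n then (n : ℝ) else 0) * poissonPMFReal r n)
      (r * poissonTail r k) := by
  refine (hasSum_natCast_mul_poissonPMFReal r (g := fun n => if k + 1 ≤ n then 1 else 0)
    ((hasSum_ite_le_poissonPMFReal r k).congr_fun fun n => ?_)).congr_fun fun n => ?_
  · simp
  · split_ifs <;> simp

lemma hasSum_ite_le_natCast_sq_mul_poissonPMFReal (k : ℕ) :
    HasSum (fun n => (if k + 2 ≤ n then (n : ℝ) ^ 2 else 0) * poissonPMFReal r n)
      (r * (r * poissonTail r k + poissonTail r (k + 1))) := by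
  have hsucc := (hasSum_ite_le_natCast_mul_poissonPMFReal r k).add
    (hasSum_ite_le_poissonPMFReal r (k + 1))
  refine (hasSum_natCast_mul_poissonPMFReal r (g := fun n => if k + 2 ≤ n then (n : ℝ) else 0)
    (hsucc.congr_fun fun n => ?_)).congr_fun fun n => ?_
  · by_cases h : k + 1 ≤ n
    · simp [h, show k + 2 ≤ n + 1 by omega]
      ring
    · simp [h, show ¬ k + 2 ≤ n + 1 by omega]
  · split_ifs <;> ring

lemma mul_one_sub_poissonTail_three_le : r * (1 - poissonTail r 3) ≤ 6 := by
  have hr : (0 : ℝ) ≤ r := r.coe_nonneg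
  have hexp : Real.exp (-r) * Real.exp r = 1 := by rw [← Real.exp_add]; simp
  have h1 := Real.pow_div_factorial_le_exp _ hr 1
  have h2 := Real.pow_div_factorial_le_exp _ hr 2
  have h3 := Real.pow_div_factorial_le_exp _ hr 3
  simp only [poissonTail, sub_sub_cancel, Finset.sum_range_succ, Finset.sum_range_zero,
    poissonPMFReal]
  norm_num [Nat.factorial] at h1 h2 h3 ⊢
  nlinarith [Real.exp_pos (-r), hexp]

end ProbabilityTheory

theorem stmt_1 :
    ∃ C : ℝ, 0 < C ∧ ∀ r : ℝ≥0,
      pvar r (fun x => if 4 ≤ x then (x : ℝ) else 0) ≤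
        C * pev r (fun x => if 4 ≤ x then (x : ℝ) else 0) := by
  refine ⟨10, by norm_num, fun r => ?_⟩
  set T := poissonTail r
  have hmean : pev r (fun x => if 4 ≤ x then (x : ℝ) else 0) = r * T 3 :=
    (hasSum_ite_le_natCast_mul_poissonPMFReal r 3).tsum_eq
  have hsq : pev r (fun x => (if 4 ≤ x then (x : ℝ) else 0) ^ 2) = r * (r * T 2 + T 3) :=
    ((hasSum_ite_le_natCast_sq_mul_poissonPMFReal r 2).congr_fun fun n => by
      simp only [Nat.reduceAdd]; split_ifs <;> ring).tsum_eq
  have hT3 : T 3 = T 2 - poissonPMFReal r 2 := poissonTail_succ r 2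
  have hq3 : poissonPMFReal r 3 ≤ T 3 := by
    linarith [poissonTail_succ r 3, poissonTail_nonneg r 4]
  have hrT : 0 ≤ r * T 3 := mul_nonneg r.coe_nonneg (poissonTail_nonneg r 3)
  calc pvar r (fun x => if 4 ≤ x then (x : ℝ) else 0)
      = 3 * (r * poissonPMFReal r 3) + r * T 3 * (r * (1 - T 3)) + r * T 3 := by
        rw [pvar, hmean, hsq]
        linear_combination -(r : ℝ) * natCast_succ_mul_poissonPMFReal_succ r 2 - r ^ 2 * hT3
    _ ≤ 3 * (r * T 3) + r * T 3 * 6 + r * T 3 := by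
        gcongr
        exact mul_one_sub_poissonTail_three_le r
    _ = 10 * pev r (fun x => if 4 ≤ x then (x : ℝ) else 0) := by rw [hmean]; ring
end

section
/- For real numbers x, y, a, b with 4 ≤ x ≤ a and a < y ≤ b, the inequality (x^2 - y·√(ay))^2 ≤ 4ab·(y - x)^2 holds. -/
/-!
With `s = √(a y)` we have `x ≤ a ≤ s ≤ y`, so `0 ≤ y s - x² ≤ 2 s (y - x) ≤ 2 √(a b) (y - x)`;
squaring gives the claim.
-/

namespace Real

theorem le_sqrt_mul_of_le {a y : ℝ} (ha : 0 ≤ a) (hay : a ≤ y) : a ≤ √(a * y) :=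
  (le_sqrt ha (mul_nonneg ha (ha.trans hay))).2 (by nlinarith)

theorem sqrt_mul_le_of_le {a y : ℝ} (ha : 0 ≤ a) (hay : a ≤ y) : √(a * y) ≤ y :=
  (sqrt_le_left (ha.trans hay)).2 (by nlinarith)

end Real

theorem sq_le_mul_of_le_of_le {x s y : ℝ} (hx : 0 ≤ x) (hxs : x ≤ s) (hsy : s ≤ y) :
    x ^ 2 ≤ y * s := by
  nlinarith

theorem mul_sub_sq_le_two_mul_mul_sub {x s y : ℝ} (hs : 0 ≤ s) (hsy : s ≤ y) :
    y * s - x ^ 2 ≤ 2 * s * (y - x) := by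
  -- the difference is `(s - x)² + s (y - s)`
  nlinarith [sq_nonneg (s - x), mul_nonneg hs (sub_nonneg.2 hsy)]

theorem stmt_4 (x y a b : ℝ) (h1 : 4 ≤ x) (h2 : x ≤ a) (h3 : a < y) (h4 : y ≤ b) :
    (x ^ 2 - y * Real.sqrt (a * y)) ^ 2 ≤ 4 * a * b * (y - x) ^ 2 := by
  have hx : 0 ≤ x := by linarith
  have ha : 0 ≤ a := hx.trans h2
  set s := √(a * y)
  have hxs : x ≤ s := h2.trans (Real.le_sqrt_mul_of_le ha h3.le)
  have hsy : s ≤ y := Real.sqrt_mul_le_of_le ha h3.le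
  have hst : s ≤ √(a * b) := Real.sqrt_le_sqrt (mul_le_mul_of_nonneg_left h4 ha)
  have hd0 : 0 ≤ y * s - x ^ 2 := sub_nonneg.2 (sq_le_mul_of_le_of_le hx hxs hsy)
  have hd : y * s - x ^ 2 ≤ 2 * √(a * b) * (y - x) :=
    (mul_sub_sq_le_two_mul_mul_sub (hx.trans hxs) hsy).trans (by gcongr; linarith)
  calc (x ^ 2 - y * s) ^ 2 = (y * s - x ^ 2) ^ 2 := by ring
    _ ≤ (2 * √(a * b) * (y - x)) ^ 2 := pow_le_pow_left₀ hd0 hd 2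
    _ = 4 * a * b * (y - x) ^ 2 := by
      rw [mul_pow, mul_pow, Real.sq_sqrt (mul_nonneg ha (by linarith))]
      ring
end

section
/- For real numbers x, y, a, b with 4 ≤ x ≤ a ≤ b < y, the inequality (x^2 - y·√(ab))^2 ≤ (x + √(ab))^2·(y - x)^2 ≤ 4ab·(y - x)^2 holds. -/
/-! With `s = √(ab)` we have `x ≤ s ≤ b < y`. Then `x² - ys ≤ 0`, and
`ys - x² ≤ (x + s)(y - x)` reduces to `0 ≤ x(y - s)`; squaring gives the first inequality.
The second is `(x + s)² ≤ (2s)² = 4ab`, multiplied by `(y - x)²`. -/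

namespace Real

lemma le_sqrt_mul_of_le_s5 {x a b : ℝ} (hx : 0 ≤ x) (hxa : x ≤ a) (hab : a ≤ b) :
    x ≤ √(a * b) :=
  le_sqrt_of_sq_le (by nlinarith)

lemma sqrt_mul_le_right_of_le {a b : ℝ} (ha : 0 ≤ a) (hab : a ≤ b) : √(a * b) ≤ b :=
  calc √(a * b) ≤ √(b * b) := sqrt_le_sqrt (mul_le_mul_of_nonneg_right hab (ha.trans hab))
    _ = b := sqrt_mul_self (ha.trans hab)

end Real

lemma sq_sub_mul_le_sq_add_mul_sq_sub {x s y : ℝ} (hx : 0 ≤ x) (hxs : x ≤ s) (hsy : s ≤ y) :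
    (x ^ 2 - y * s) ^ 2 ≤ (x + s) ^ 2 * (y - x) ^ 2 := by
  rw [← mul_pow]
  apply sq_le_sq'
  · nlinarith
  · nlinarith

lemma sq_add_le_four_mul_sq {x s : ℝ} (hx : 0 ≤ x) (hxs : x ≤ s) : (x + s) ^ 2 ≤ 4 * s ^ 2 := by
  nlinarith

theorem stmt_5 (x y a b : ℝ) (h1 : 4 ≤ x) (h2 : x ≤ a) (h3 : a ≤ b) (h4 : b < y) :
    (x ^ 2 - y * Real.sqrt (a * b)) ^ 2 ≤ (x + Real.sqrt (a * b)) ^ 2 * (y - x) ^ 2 ∧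
    (x + Real.sqrt (a * b)) ^ 2 * (y - x) ^ 2 ≤ 4 * a * b * (y - x) ^ 2 := by
  have hx : 0 ≤ x := by linarith
  have hxs : x ≤ √(a * b) := Real.le_sqrt_mul_of_le_s5 hx h2 h3
  have hsy : √(a * b) ≤ y := (Real.sqrt_mul_le_right_of_le (hx.trans h2) h3).trans h4.le
  have hs_sq : √(a * b) ^ 2 = a * b := Real.sq_sqrt (by nlinarith)
  refine ⟨sq_sub_mul_le_sq_add_mul_sq_sub hx hxs hsy, ?_⟩
  calc (x + √(a * b)) ^ 2 * (y - x) ^ 2 ≤ 4 * √(a * b) ^ 2 * (y - x) ^ 2 :=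
        mul_le_mul_of_nonneg_right (sq_add_le_four_mul_sq hx hxs) (sq_nonneg _)
    _ = 4 * a * b * (y - x) ^ 2 := by rw [hs_sq, mul_assoc 4 a b]
end

section
/- For real numbers x, y, a, b with a < x ≤ b < y and a ≥ 0, the inequality (x√x - y√b)^2 ≤ 4b·(y - x)^2 holds. -/
/-! Put `t = √x` and `s = √b`, so `0 ≤ t ≤ s` and `s ^ 2 ≤ y`. The claim becomes
`|y s - t ^ 3| ≤ 2 s (y - t ^ 2)`: the left side is `y s - t ^ 3 ≥ s ^ 3 - t ^ 3 ≥ 0`, and the gap is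
`s (y - s ^ 2) + (s - t) (s ^ 2 + s t - t ^ 2) ≥ 0`. -/

lemma sub_cube_le_two_mul_sub_sq {s t y : ℝ} (ht : 0 ≤ t) (hts : t ≤ s) (hy : s ^ 2 ≤ y) :
    y * s - t ^ 3 ≤ 2 * s * (y - t ^ 2) := by
  have hs : 0 ≤ s := ht.trans hts
  have gap : 2 * s * (y - t ^ 2) - (y * s - t ^ 3)
      = s * (y - s ^ 2) + (s - t) * (s ^ 2 + s * t - t ^ 2) := by ring
  have hquad : 0 ≤ s ^ 2 + s * t - t ^ 2 := by nlinarith [mul_nonneg hs (sub_nonneg.2 hts)]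
  linarith [mul_nonneg hs (sub_nonneg.2 hy), mul_nonneg (sub_nonneg.2 hts) hquad]

lemma cube_le_mul_of_sq_le {s t y : ℝ} (ht : 0 ≤ t) (hts : t ≤ s) (hy : s ^ 2 ≤ y) :
    t ^ 3 ≤ y * s :=
  calc t ^ 3 ≤ s ^ 3 := pow_le_pow_left₀ ht hts 3
    _ = s ^ 2 * s := by ring
    _ ≤ y * s := mul_le_mul_of_nonneg_right hy (ht.trans hts)

lemma sq_sub_cube_le {s t y : ℝ} (ht : 0 ≤ t) (hts : t ≤ s) (hy : s ^ 2 ≤ y) :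
    (t ^ 2 * t - y * s) ^ 2 ≤ 4 * s ^ 2 * (y - t ^ 2) ^ 2 :=
  calc (t ^ 2 * t - y * s) ^ 2 = (y * s - t ^ 3) ^ 2 := by ring
    _ ≤ (2 * s * (y - t ^ 2)) ^ 2 :=
      pow_le_pow_left₀ (sub_nonneg.2 (cube_le_mul_of_sq_le ht hts hy))
        (sub_cube_le_two_mul_sub_sq ht hts hy) 2
    _ = 4 * s ^ 2 * (y - t ^ 2) ^ 2 := by ring

theorem stmt_8 (x y a b : ℝ) (h0 : 0 ≤ a) (h1 : a < x) (h2 : x ≤ b) (h3 : b < y) :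
    (x * Real.sqrt x - y * Real.sqrt b) ^ 2 ≤ 4 * b * (y - x) ^ 2 := by
  have hx : 0 ≤ x := h0.trans h1.le
  have hb : 0 ≤ b := hx.trans h2
  have key := sq_sub_cube_le (Real.sqrt_nonneg x) (Real.sqrt_le_sqrt h2)
    ((Real.sq_sqrt hb).trans_le h3.le)
  rwa [Real.sq_sqrt hx, Real.sq_sqrt hb] at key
end

section
/- For X ~ Poisson(λ) with λ < 1 and real numbers b ≥ a ≥ 2, E[(X·√(min(X,a)·min(X,b)))^2·1(X ≥ 4)] ≤ C·√(ab)·(λ^4 + E[X·√(min(X,a)·min(X,b))·1(X ≥ 4)]) for some absolute constant C. -/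
/-! For `x ≥ 4` we have `min(x,a) min(x,b) ≤ x √(ab)` (each minimum is at most a geometric mean)
and, since `λ < 1`, `P(X = x) ≤ λ⁴ / x!`. With `x³ ≤ 3! eˣ` the left-hand side is therefore
at most `6 √(ab) λ⁴ ∑ eˣ / x! = 6 e^e √(ab) λ⁴`. -/

open ProbabilityTheory Real Nat
open scoped NNReal

lemma poissonPMFReal_le_pow_div_factorial {r : ℝ≥0} (hr : (r : ℝ) ≤ 1) {k n : ℕ} (hkn : k ≤ n) :
    poissonPMFReal r n ≤ r ^ k / n ! := by
  unfold poissonPMFReal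
  gcongr
  calc exp (-r) * r ^ n ≤ 1 * r ^ n := by gcongr; simp
    _ ≤ r ^ k := by rw [one_mul]; exact pow_le_pow_of_le_one r.coe_nonneg hr hkn

lemma pev_nonneg {r : ℝ≥0} {f : ℕ → ℝ} (hf : ∀ n, 0 ≤ f n) : 0 ≤ pev r f :=
  tsum_nonneg fun n => mul_nonneg (hf n) poissonPMFReal_nonneg

lemma pev_le_of_hasSum {r : ℝ≥0} {f g : ℕ → ℝ} {s : ℝ} (hf : ∀ n, 0 ≤ f n)
    (hfg : ∀ n, f n * poissonPMFReal r n ≤ g n) (hg : HasSum g s) : pev r f ≤ s :=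
  have hsum := Summable.of_nonneg_of_le (fun n => mul_nonneg (hf n) poissonPMFReal_nonneg) hfg
    hg.summable
  (hsum.tsum_le_tsum hfg hg.summable).trans_eq hg.tsum_eq

lemma min_mul_min_le_mul_sqrt {x a b : ℝ} (hx : 0 ≤ x) (ha : 0 ≤ a) (hb : 0 ≤ b) :
    min x a * min x b ≤ x * √(a * b) := by
  have min_sq_le {c : ℝ} (hc : 0 ≤ c) : min x c ^ 2 ≤ x * c := by
    rw [sq]; exact mul_le_mul (min_le_left _ _) (min_le_right _ _) (le_min hx hc) hx
  have hsq : (min x a * min x b) ^ 2 ≤ x ^ 2 * (a * b) :=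
    calc (min x a * min x b) ^ 2 = min x a ^ 2 * min x b ^ 2 := by ring
      _ ≤ (x * a) * (x * b) := by gcongr; exacts [min_sq_le ha, min_sq_le hb]
      _ = x ^ 2 * (a * b) := by ring
  calc min x a * min x b ≤ √(x ^ 2 * (a * b)) := le_sqrt_of_sq_le hsq
    _ = x * √(a * b) := by rw [sqrt_mul (sq_nonneg x), sqrt_sq hx]

lemma cast_pow_three_le_exp (x : ℕ) : (x : ℝ) ^ 3 ≤ 6 * exp 1 ^ x := by
  have := Real.pow_div_factorial_le_exp x x.cast_nonneg 3
  rw [exp_one_pow]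
  norm_num [Nat.factorial] at this
  linarith

lemma fab_sq_mul_poissonPMFReal_le {a b : ℝ} (ha : 0 ≤ a) (hb : 0 ≤ b) {r : ℝ≥0}
    (hr : (r : ℝ) ≤ 1) (x : ℕ) :
    fab a b x ^ 2 * poissonPMFReal r x ≤ 6 * √(a * b) * r ^ 4 * (exp 1 ^ x / x !) := by
  unfold fab
  split_ifs with hx
  · have hx0 : (0 : ℝ) ≤ x := x.cast_nonneg
    calc (x * √(min (x : ℝ) a * min (x : ℝ) b)) ^ 2 * poissonPMFReal r x
        = x ^ 2 * (min (x : ℝ) a * min (x : ℝ) b) * poissonPMFReal r x := by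
          rw [mul_pow, sq_sqrt (mul_nonneg (le_min hx0 ha) (le_min hx0 hb))]
      _ ≤ x ^ 2 * (x * √(a * b)) * (r ^ 4 / x !) := by
          gcongr x ^ 2 * ?_ * ?_
          · exact poissonPMFReal_nonneg
          · exact min_mul_min_le_mul_sqrt hx0 ha hb
          · exact poissonPMFReal_le_pow_div_factorial hr hx
      _ = √(a * b) * r ^ 4 * (x ^ 3 / x !) := by ring
      _ ≤ √(a * b) * r ^ 4 * (6 * exp 1 ^ x / x !) := by gcongr; exact cast_pow_three_le_exp x
      _ = 6 * √(a * b) * r ^ 4 * (exp 1 ^ x / x !) := by ring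
  · rw [sq, zero_mul, zero_mul]
    positivity

lemma fab_nonneg (a b : ℝ) (x : ℕ) : 0 ≤ fab a b x := by
  unfold fab
  split_ifs
  · positivity
  · rfl

theorem stmt_10 :
    ∃ C : ℝ, 0 < C ∧ ∀ (r : ℝ≥0), (r : ℝ) < 1 → ∀ a b : ℝ, 2 ≤ a → a ≤ b →
      pev r (fun x => (fab a b x) ^ 2) ≤
        C * Real.sqrt (a * b) * ((r : ℝ) ^ 4 + pev r (fab a b)) := by
  refine ⟨6 * exp (exp 1), by positivity, fun r hr a b ha hab => ?_⟩
  have ha0 : 0 ≤ a := by linarith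
  have hexp : HasSum (fun x : ℕ => 6 * √(a * b) * r ^ 4 * (exp 1 ^ x / x !))
      (6 * √(a * b) * r ^ 4 * exp (exp 1)) := by
    simpa [exp_eq_exp_ℝ] using (NormedSpace.expSeries_div_hasSum_exp (exp 1)).mul_left _
  calc pev r (fun x => fab a b x ^ 2) ≤ 6 * √(a * b) * r ^ 4 * exp (exp 1) :=
        pev_le_of_hasSum (fun _ => sq_nonneg _)
          (fab_sq_mul_poissonPMFReal_le ha0 (ha0.trans hab) hr.le) hexp
    _ = 6 * exp (exp 1) * √(a * b) * (r ^ 4 + 0) := by ring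
    _ ≤ 6 * exp (exp 1) * √(a * b) * (r ^ 4 + pev r (fab a b)) := by
        gcongr; exact pev_nonneg (fab_nonneg a b)
end
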